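/- Let k ≥ 0, let φ : ℝ³ → ℂ³ be σ-integrable on ∂D = ∂B₁ ∪ ∂B₂, and let x ∈ ℝ³ ∖ (∂B₁ ∪ ∂B₂), so that the kernel y ↦ G^k(x−y) is smooth and bounded on ∂D. Then ⟨ν₁(x), ∫_{∂D} G^k(x−y) × φ(y) dσ(y)⟩ = ⟨ν₂(−x), ∫_{∂D} G^k(−x−y) × φ(−y) dσ(y)⟩; that is, writing ∇×A_D^k[φ](x) = ∫_{∂D} G^k(x−y) × φ(y) dσ(y) and φ̃(ỹ) := φ(−ỹ), one has ν₁(x)·(∇×A_D^k[φ])(x) = ν₂(−x)·(∇×A_D^k[φ̃])(−x). -/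

import Mathlib

open MeasureTheory

/-- Coercion `ℝ³ ↪ ℂ³` (componentwise). -/
noncomputable def toC3 (x : EuclideanSpace ℝ (Fin 3)) : EuclideanSpace ℂ (Fin 3) :=
  (WithLp.equiv 2 (Fin 3 → ℂ)).symm fun i => (x i : ℂ)

/-- Bilinear pairing of a real vector with a `ℂ³` vector. -/
noncomputable def pairRC (a : EuclideanSpace ℝ (Fin 3)) (b : EuclideanSpace ℂ (Fin 3)) : ℂ :=
  ∑ i, (a i : ℂ) * b i

/-- Three-dimensional cross product over `ℂ`. -/
noncomputable def crossC (a b : EuclideanSpace ℂ (Fin 3)) : EuclideanSpace ℂ (Fin 3) :=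
  (WithLp.equiv 2 (Fin 3 → ℂ)).symm
    ![a 1 * b 2 - a 2 * b 1, a 2 * b 0 - a 0 * b 2, a 0 * b 1 - a 1 * b 0]

/-- The gradient kernel `G^k(z) = ∇Γ^k(z) = e^{ik|z|}(1 - ik|z|)·z/(4π|z|³) ∈ ℂ³`. -/
noncomputable def gradHelmholtzFundamental (k : ℝ) (z : EuclideanSpace ℝ (Fin 3)) :
    EuclideanSpace ℂ (Fin 3) :=
  (WithLp.equiv 2 (Fin 3 → ℂ)).symm fun i =>
    Complex.exp (Complex.I * k * ‖z‖) * (1 - Complex.I * k * ‖z‖) * (z i)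
      / (4 * Real.pi * ‖z‖ ^ 3)

/-- Center of the first ball: `c₁ = (-r - ε/2, 0, 0)`. -/
noncomputable def ctr1 (r ε : ℝ) : EuclideanSpace ℝ (Fin 3) :=
  (WithLp.equiv 2 (Fin 3 → ℝ)).symm ![-r - ε / 2, 0, 0]

/-- Center of the second ball: `c₂ = (r + ε/2, 0, 0)`. -/
noncomputable def ctr2 (r ε : ℝ) : EuclideanSpace ℝ (Fin 3) :=
  (WithLp.equiv 2 (Fin 3 → ℝ)).symm ![r + ε / 2, 0, 0]

/-- Outward unit normal on `∂B₁`: `ν₁(x) = (x - c₁)/r`. -/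
noncomputable def nu1 (r ε : ℝ) (x : EuclideanSpace ℝ (Fin 3)) : EuclideanSpace ℝ (Fin 3) :=
  r⁻¹ • (x - ctr1 r ε)

/-- Outward unit normal on `∂B₂`: `ν₂(x) = (x - c₂)/r`. -/
noncomputable def nu2 (r ε : ℝ) (x : EuclideanSpace ℝ (Fin 3)) : EuclideanSpace ℝ (Fin 3) :=
  r⁻¹ • (x - ctr2 r ε)

/-! The configuration is symmetric under `y ↦ -y`, which swaps `∂B₁` and `∂B₂` and maps `ν₁(x)` to
`-ν₂(-x)`. Substituting `y ↦ -y` (an isometry, hence preserving `μH[2]`) in the second integral and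
using that the kernel `G^k` is odd shows that it is minus the first one; the two sign changes cancel
in the pairing. -/

theorem setIntegral_comp_neg_hausdorffMeasure {E F : Type*} [NormedAddCommGroup E]
    [MeasurableSpace E] [BorelSpace E] [NormedAddCommGroup F] [NormedSpace ℝ F]
    (d : ℝ) (f : E → F) (s : Set E) :
    ∫ y in s, f (-y) ∂μH[d] = ∫ y in -s, f y ∂μH[d] := by
  have h := ((IsometryEquiv.neg E).measurePreserving_hausdorffMeasure d).setIntegral_preimage_emb
    (IsometryEquiv.neg E).toHomeomorph.measurableEmbedding f (-s)
  rwa [show IsometryEquiv.neg E ⁻¹' (-s) = s from neg_neg s] at h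

theorem gradHelmholtzFundamental_neg (k : ℝ) (z : EuclideanSpace ℝ (Fin 3)) :
    gradHelmholtzFundamental k (-z) = -gradHelmholtzFundamental k z := by
  ext i
  simp only [gradHelmholtzFundamental, WithLp.equiv_symm_apply, PiLp.toLp_apply, PiLp.neg_apply,
    norm_neg, Complex.ofReal_neg]
  ring

theorem crossC_neg_left (a b : EuclideanSpace ℂ (Fin 3)) : crossC (-a) b = -crossC a b := by
  ext i
  fin_cases i <;>
    simp only [crossC, WithLp.equiv_symm_apply, PiLp.neg_apply, Fin.isValue, Fin.zero_eta,
      Fin.mk_one, Fin.reduceFinMk, Matrix.cons_val_zero, Matrix.cons_val_one, Matrix.cons_val] <;>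
    ring

theorem pairRC_neg_neg (a : EuclideanSpace ℝ (Fin 3)) (b : EuclideanSpace ℂ (Fin 3)) :
    pairRC (-a) (-b) = pairRC a b := by
  simp [pairRC]

theorem ctr2_eq_neg_ctr1 (r ε : ℝ) : ctr2 r ε = -ctr1 r ε := by
  ext i
  fin_cases i <;> simp [ctr1, ctr2, add_comm]

theorem nu2_neg (r ε : ℝ) (x : EuclideanSpace ℝ (Fin 3)) : nu2 r ε (-x) = -nu1 r ε x := by
  rw [nu1, nu2, ctr2_eq_neg_ctr1, ← smul_neg, neg_sub, neg_sub_neg]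

theorem neg_sphere_ctr1_union_sphere_ctr2 (r ε : ℝ) :
    -(Metric.sphere (ctr1 r ε) r ∪ Metric.sphere (ctr2 r ε) r)
      = Metric.sphere (ctr1 r ε) r ∪ Metric.sphere (ctr2 r ε) r := by
  rw [Set.union_neg, neg_sphere, neg_sphere, ctr2_eq_neg_ctr1, neg_neg, Set.union_comm]

theorem stmt_6_general (r ε : ℝ) (k : ℝ)
    (φ : EuclideanSpace ℝ (Fin 3) → EuclideanSpace ℂ (Fin 3))
    (x : EuclideanSpace ℝ (Fin 3)) :
    pairRC (nu1 r ε x)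
        (∫ y in Metric.sphere (ctr1 r ε) r ∪ Metric.sphere (ctr2 r ε) r,
          crossC (gradHelmholtzFundamental k (x - y)) (φ y) ∂μH[2])
      = pairRC (nu2 r ε (-x))
          (∫ y in Metric.sphere (ctr1 r ε) r ∪ Metric.sphere (ctr2 r ε) r,
            crossC (gradHelmholtzFundamental k (-x - y)) (φ (-y)) ∂μH[2]) := by
  have h_odd : ∀ y, crossC (gradHelmholtzFundamental k (-x - y)) (φ (-y))
      = -crossC (gradHelmholtzFundamental k (x - -y)) (φ (-y)) := fun y => by
    rw [← crossC_neg_left, ← gradHelmholtzFundamental_neg]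
    congr 2
    abel
  simp_rw [h_odd, integral_neg, setIntegral_comp_neg_hausdorffMeasure 2
      (fun y => crossC (gradHelmholtzFundamental k (x - y)) (φ y)),
    neg_sphere_ctr1_union_sphere_ctr2, nu2_neg, pairRC_neg_neg]

/-- For `x` off `∂D` and `φ̃(ỹ) := φ(-ỹ)`, the curl of the single layer potential
satisfies `ν₁(x)·(∇×A_D^k[φ])(x) = ν₂(-x)·(∇×A_D^k[φ̃])(-x)`. -/
theorem stmt_6 (r ε : ℝ) (hr : 0 < r) (hε : 0 < ε) (k : ℝ) (hk : 0 ≤ k)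
    (φ : EuclideanSpace ℝ (Fin 3) → EuclideanSpace ℂ (Fin 3))
    (hφ : IntegrableOn φ (Metric.sphere (ctr1 r ε) r ∪ Metric.sphere (ctr2 r ε) r) μH[2])
    (x : EuclideanSpace ℝ (Fin 3))
    (hx : x ∉ Metric.sphere (ctr1 r ε) r ∪ Metric.sphere (ctr2 r ε) r) :
    pairRC (nu1 r ε x)
        (∫ y in Metric.sphere (ctr1 r ε) r ∪ Metric.sphere (ctr2 r ε) r,
          crossC (gradHelmholtzFundamental k (x - y)) (φ y) ∂μH[2])
      = pairRC (nu2 r ε (-x))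
          (∫ y in Metric.sphere (ctr1 r ε) r ∪ Metric.sphere (ctr2 r ε) r,
            crossC (gradHelmholtzFundamental k (-x - y)) (φ (-y)) ∂μH[2]) :=
  stmt_6_general r ε k φ x
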